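/- Let σ ⊂ ℚ^N be a strongly convex N-dimensional rational polyhedral cone with N > n, σ' ⊂ ℚ^n an n-dimensional convex rational cone, and π : ℚ^N → ℚ^n a linear map with π(σ) = σ'. Then every point of σ' has a preimage in σ lying on the boundary of σ, i.e. σ' is the union of the images of the (N−1)-dimensional faces of σ. -/
import Mathlib


/-- The finitely generated convex cone on a set `T`: all nonnegative rational
combinations of elements of `T`. -/
def ConeGen {V : Type*} [AddCommGroup V] [Module ℚ V] (T : Set V) : Set V :=
  {x | ∃ (s : Finset V) (c : V → ℚ), ↑s ⊆ T ∧ (∀ v, 0 ≤ c v) ∧ x = ∑ v ∈ s, c v • v}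

/-- A (rational) polyhedral cone: the cone generated by finitely many vectors. -/
def IsPolyCone {V : Type*} [AddCommGroup V] [Module ℚ V] (σ : Set V) : Prop :=
  ∃ T : Finset V, σ = ConeGen (↑T : Set V)

/-- A cone is strongly convex if it contains no line. -/
def IsStronglyConvex {V : Type*} [AddCommGroup V] [Module ℚ V] (σ : Set V) : Prop :=
  ∀ x ∈ σ, -x ∈ σ → x = 0

/-- The dimension of a cone: the dimension of its linear span. -/
noncomputable def coneDim {V : Type*} [AddCommGroup V] [Module ℚ V] (σ : Set V) : ℕ :=
  Module.finrank ℚ (Submodule.span ℚ σ)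

/-- `τ` is a face of `σ`: the intersection of `σ` with a supporting hyperplane
(including `σ` itself, via the zero functional). -/
def IsFace {V : Type*} [AddCommGroup V] [Module ℚ V] (σ τ : Set V) : Prop :=
  ∃ m : V →ₗ[ℚ] ℚ, (∀ x ∈ σ, 0 ≤ m x) ∧ τ = σ ∩ {x | m x = 0}


namespace ConeAux

open Submodule Module

variable {V : Type*} [AddCommGroup V] [Module ℚ V]

lemma subset_coneGen (A : Set V) : A ⊆ ConeGen A := by
  intro x hx
  classical
  refine ⟨{x}, fun v => if v = x then 1 else 0, by simpa using hx, ?_, by simp⟩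
  intro v; dsimp only; split <;> norm_num

lemma coneGen_mono {A B : Set V} (h : A ⊆ B) : ConeGen A ⊆ ConeGen B := by
  rintro x ⟨s, c, hs, hc, rfl⟩
  exact ⟨s, c, hs.trans h, hc, rfl⟩

lemma mem_coneGen_iff (T : Finset V) {x : V} :
    x ∈ ConeGen (↑T : Set V) ↔ ∃ c : V → ℚ, (∀ v, 0 ≤ c v) ∧ x = ∑ v ∈ T, c v • v := by
  classical
  constructor
  · rintro ⟨s, c, hs, hc, rfl⟩
    refine ⟨fun v => if v ∈ s then c v else 0, fun v => by dsimp only; split; exacts [hc v, le_refl 0], ?_⟩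
    rw [← Finset.sum_subset (Finset.coe_subset.mp hs)
          (fun v _ hv => by simp [hv])]
    exact Finset.sum_congr rfl fun v hv => by simp [hv]
  · rintro ⟨c, hc, rfl⟩
    exact ⟨T, c, subset_rfl, hc, rfl⟩

lemma zero_mem_coneGen (A : Set V) : (0 : V) ∈ ConeGen A :=
  ⟨∅, 0, by simp, fun v => le_refl 0, by simp⟩

lemma add_mem_coneGen {T : Finset V} {x y : V} (hx : x ∈ ConeGen (↑T : Set V))
    (hy : y ∈ ConeGen (↑T : Set V)) : x + y ∈ ConeGen (↑T : Set V) := by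
  rw [mem_coneGen_iff] at *
  obtain ⟨c, hc, rfl⟩ := hx
  obtain ⟨d, hd, rfl⟩ := hy
  exact ⟨c + d, fun v => add_nonneg (hc v) (hd v), by
    rw [← Finset.sum_add_distrib]; exact Finset.sum_congr rfl fun v _ => by
      simp [add_smul]⟩

lemma smul_mem_coneGen {T : Finset V} {a : ℚ} (ha : 0 ≤ a) {x : V}
    (hx : x ∈ ConeGen (↑T : Set V)) : a • x ∈ ConeGen (↑T : Set V) := by
  rw [mem_coneGen_iff] at *
  obtain ⟨c, hc, rfl⟩ := hx
  exact ⟨fun v => a * c v, fun v => mul_nonneg ha (hc v), by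
    rw [Finset.smul_sum]; exact Finset.sum_congr rfl fun v _ => by simp [smul_smul]⟩

lemma coneGen_min {T : Finset V} {A : Set V} (h : A ⊆ ConeGen (↑T : Set V)) :
    ConeGen A ⊆ ConeGen (↑T : Set V) := by
  rintro x ⟨s, c, hs, hc, rfl⟩
  refine Finset.sum_induction _ (· ∈ ConeGen (↑T : Set V))
    (fun a b ha hb => add_mem_coneGen ha hb) (zero_mem_coneGen _) ?_
  intro v hv
  exact smul_mem_coneGen (hc v) (h (hs hv))

lemma span_coneGen (A : Set V) : span ℚ (ConeGen A) = span ℚ A := by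
  refine le_antisymm (span_le.mpr ?_) (span_mono (subset_coneGen A))
  rintro x ⟨s, c, hs, hc, rfl⟩
  exact Submodule.sum_mem _ fun v hv => Submodule.smul_mem _ _ (subset_span (hs hv))

lemma nonneg_on_coneGen {T : Finset V} {m : V →ₗ[ℚ] ℚ} (hm : ∀ t ∈ T, 0 ≤ m t) {x : V}
    (hx : x ∈ ConeGen (↑T : Set V)) : 0 ≤ m x := by
  rw [mem_coneGen_iff] at hx
  obtain ⟨c, hc, rfl⟩ := hx
  rw [map_sum]
  exact Finset.sum_nonneg fun v hv => by
    rw [map_smul, smul_eq_mul]; exact mul_nonneg (hc v) (hm v hv)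

lemma exists_dual_ne_zero_of_ne_top (U : Submodule ℚ V) (hU : U ≠ ⊤) :
    ∃ m : V →ₗ[ℚ] ℚ, m ≠ 0 ∧ ∀ u ∈ U, m u = 0 := by
  obtain ⟨y, hy⟩ : ∃ y, y ∉ U := by
    by_contra h
    push_neg at h
    exact hU (Submodule.eq_top_iff'.mpr h)
  have hy' : (Submodule.Quotient.mk y : V ⧸ U) ≠ 0 := by
    simpa [Submodule.Quotient.mk_eq_zero] using hy
  obtain ⟨g, hg⟩ : ∃ g : Module.Dual ℚ (V ⧸ U), g (Submodule.Quotient.mk y) ≠ 0 := by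
    by_contra h
    push_neg at h
    exact hy' ((Module.forall_dual_apply_eq_zero_iff ℚ _).mp h)
  refine ⟨g.comp U.mkQ, fun h0 => hg ?_, fun u hu => ?_⟩
  · have := LinearMap.congr_fun h0 y
    simpa using this
  · simp [Submodule.mkQ_apply, (Submodule.Quotient.mk_eq_zero U).mpr hu]

lemma eq_zero_of_forall_dual {x : V} (h : ∀ m : V →ₗ[ℚ] ℚ, 0 ≤ m x) : x = 0 := by
  rw [← Module.forall_dual_apply_eq_zero_iff ℚ x]
  intro φ
  have h1 := h φ
  have h2 := h (-φ)
  simp only [LinearMap.neg_apply] at h2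
  linarith


lemma farkas_aux : ∀ (k : ℕ) (T : Finset V), T.card ≤ k →
    ∀ x : V, (∀ m : V →ₗ[ℚ] ℚ, (∀ t ∈ T, 0 ≤ m t) → 0 ≤ m x) →
    x ∈ ConeGen (↑T : Set V) := by
  intro k
  induction k with
  | zero =>
    intro T hT x h
    have hT0 : T = ∅ := Finset.card_eq_zero.mp (Nat.le_zero.mp hT)
    subst hT0
    have hx : x = 0 := eq_zero_of_forall_dual fun m => h m (by simp)
    subst hx
    exact zero_mem_coneGen _
  | succ k ih =>
    intro T hT x h
    classical
    rcases T.eq_empty_or_nonempty with rfl | ⟨v, hv⟩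
    · have hx : x = 0 := eq_zero_of_forall_dual fun m => h m (by simp)
      subst hx
      exact zero_mem_coneGen _
    · set S := T.erase v with hS
      have hScard : S.card ≤ k := by
        rw [hS, Finset.card_erase_of_mem hv]
        omega
      by_cases hcase : ∀ m : V →ₗ[ℚ] ℚ, (∀ t ∈ S, 0 ≤ m t) → 0 ≤ m x
      · exact coneGen_mono (by exact_mod_cast Finset.coe_subset.mpr (Finset.erase_subset v T))
          (ih S hScard x hcase)
      · push_neg at hcase
        obtain ⟨m₀, hm₀S, hm₀x⟩ := hcase
        have hm₀v : m₀ v < 0 := by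
          by_contra hge
          push_neg at hge
          refine absurd (h m₀ fun t ht => ?_) (by linarith)
          rcases eq_or_ne t v with rfl | hne
          · exact hge
          · exact hm₀S t (Finset.mem_erase.mpr ⟨hne, ht⟩)
        set p : V →ₗ[ℚ] V := LinearMap.id - LinearMap.smulRight m₀ ((m₀ v)⁻¹ • v) with hp
        have hpdef : ∀ w, p w = w - (m₀ w * (m₀ v)⁻¹) • v := by
          intro w
          simp [hp, LinearMap.smulRight_apply, smul_smul]
        have hpv : p v = 0 := by
          rw [hpdef, mul_inv_cancel₀ (ne_of_lt hm₀v), one_smul, sub_self]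
        set S' := S.image p with hS'
        have hS'card : S'.card ≤ k := le_trans Finset.card_image_le hScard
        have hpx : p x ∈ ConeGen (↑S' : Set V) := by
          refine ih S' hS'card (p x) fun m' hm' => ?_
          have hcomp : ∀ t ∈ T, 0 ≤ (m'.comp p) t := by
            intro t ht
            rcases eq_or_ne t v with rfl | hne
            · simp [LinearMap.comp_apply, hpv]
            · exact hm' (p t) (Finset.mem_image_of_mem p (Finset.mem_erase.mpr ⟨hne, ht⟩))
          simpa using h (m'.comp p) hcomp
        have hS'sub : (↑S' : Set V) ⊆ ConeGen (↑T : Set V) := by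
          intro y hy
          obtain ⟨s, hsS, rfl⟩ := Finset.mem_image.mp (by exact_mod_cast hy)
          have hs0 : 0 ≤ m₀ s := hm₀S s hsS
          have hcoef : 0 ≤ -(m₀ s * (m₀ v)⁻¹) := by
            have : (m₀ v)⁻¹ < 0 := inv_neg''.mpr hm₀v
            nlinarith
          have : p s = s + (-(m₀ s * (m₀ v)⁻¹)) • v := by
            rw [hpdef, neg_smul, sub_eq_add_neg]
          rw [this]
          exact add_mem_coneGen
            (subset_coneGen _ (by exact_mod_cast Finset.mem_erase.mp hsS |>.2 |> Finset.mem_coe.mpr))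
            (smul_mem_coneGen hcoef (subset_coneGen _ (Finset.mem_coe.mpr hv)))
        have hxeq : x = p x + (m₀ x * (m₀ v)⁻¹) • v := by
          rw [hpdef, sub_add_cancel]
        have hcoefx : 0 ≤ m₀ x * (m₀ v)⁻¹ := by
          have : (m₀ v)⁻¹ < 0 := inv_neg''.mpr hm₀v
          nlinarith
        rw [hxeq]
        exact add_mem_coneGen (coneGen_min hS'sub hpx)
          (smul_mem_coneGen hcoefx (subset_coneGen _ (Finset.mem_coe.mpr hv)))

lemma farkas {T : Finset V} {x : V} (hx : x ∉ ConeGen (↑T : Set V)) :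
    ∃ m : V →ₗ[ℚ] ℚ, (∀ t ∈ T, 0 ≤ m t) ∧ m x < 0 := by
  by_contra h
  push_neg at h
  exact hx (farkas_aux T.card T le_rfl x h)


variable [FiniteDimensional ℚ V]

lemma finrank_ker_of_ne_zero {m : V →ₗ[ℚ] ℚ} (hm : m ≠ 0) :
    finrank ℚ (LinearMap.ker m) = finrank ℚ V - 1 := by
  have := Module.Dual.finrank_ker_add_one_of_ne_zero (f := m) hm
  omega

lemma exists_facet (T : Finset V) (hT : span ℚ (↑T : Set V) = ⊤)
    (x : V) (hx : x ∉ ConeGen (↑T : Set V)) :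
    ∃ m : V →ₗ[ℚ] ℚ, (∀ t ∈ T, 0 ≤ m t) ∧ m x < 0 ∧
      finrank ℚ (span ℚ {t : V | t ∈ T ∧ m t = 0}) = finrank ℚ V - 1 := by
  classical
  set d := finrank ℚ V with hd
  -- the "zero set" dimension
  set k : (V →ₗ[ℚ] ℚ) → ℕ := fun m => finrank ℚ (span ℚ {t : V | t ∈ T ∧ m t = 0}) with hk
  have upper : ∀ m : V →ₗ[ℚ] ℚ, m x < 0 → k m ≤ d - 1 := by
    intro m hmx
    have hm0 : m ≠ 0 := by
      intro h; rw [h] at hmx; simp at hmx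
    have hsub : span ℚ {t : V | t ∈ T ∧ m t = 0} ≤ LinearMap.ker m :=
      span_le.mpr fun t ht => ht.2
    calc k m ≤ finrank ℚ (LinearMap.ker m) := Submodule.finrank_mono hsub
      _ = d - 1 := finrank_ker_of_ne_zero hm0
  have step : ∀ m : V →ₗ[ℚ] ℚ, (∀ t ∈ T, 0 ≤ m t) → m x < 0 → k m < d - 1 →
      ∃ m' : V →ₗ[ℚ] ℚ, (∀ t ∈ T, 0 ≤ m' t) ∧ m' x < 0 ∧ k m < k m' := by
    intro m hmT hmx hklt
    set Z : Set V := {t : V | t ∈ T ∧ m t = 0} with hZ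
    have hZker : span ℚ Z ≤ LinearMap.ker m := span_le.mpr fun t ht => ht.2
    set U : Submodule ℚ V := span ℚ Z ⊔ span ℚ {x} with hU
    have hUfr : finrank ℚ U ≤ k m + 1 := by
      have h1 := Submodule.finrank_sup_add_finrank_inf_eq (span ℚ Z) (span ℚ {x})
      have h2 : finrank ℚ (span ℚ ({x} : Set V)) ≤ 1 := by
        rcases eq_or_ne x 0 with hx0 | hx0
        · rw [hx0, Submodule.span_zero_singleton]
          simp
        · rw [finrank_span_singleton hx0]
      have hkm : k m = finrank ℚ (span ℚ Z) := rfl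
      rw [← hU] at h1
      omega
    have hUne : U ≠ ⊤ := by
      intro h
      have := finrank_top ℚ V
      rw [← h] at this
      omega
    obtain ⟨m', hm'0, hm'U⟩ := exists_dual_ne_zero_of_ne_top U hUne
    have hm'x : m' x = 0 := hm'U x (le_sup_right (a := span ℚ Z) (Submodule.mem_span_singleton_self x))
    have hm'Z : ∀ z ∈ Z, m' z = 0 := fun z hz => hm'U z (le_sup_left (b := span ℚ {x}) (subset_span hz))
    have hex : ∃ t₁ ∈ T, m' t₁ ≠ 0 := by
      by_contra hc
      push_neg at hc
      refine hm'0 (LinearMap.ker_eq_top.mp ?_)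
      rw [eq_top_iff, ← hT]
      exact span_le.mpr fun t ht => hc t ht
    obtain ⟨t₁, ht₁T, ht₁⟩ := hex
    -- pick g ∈ {m', -m'} with a strictly negative value on T
    obtain ⟨g, hgneg, hgx, hgZ⟩ :
        ∃ g : V →ₗ[ℚ] ℚ, (∃ t ∈ T, g t < 0) ∧ g x = 0 ∧ ∀ z ∈ Z, g z = 0 := by
      rcases lt_or_gt_of_ne ht₁ with hlt | hgt
      · exact ⟨m', ⟨t₁, ht₁T, hlt⟩, hm'x, hm'Z⟩
      · exact ⟨-m', ⟨t₁, ht₁T, by simpa using hgt⟩, by simp [hm'x],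
          fun z hz => by simp [hm'Z z hz]⟩
    set D := T.filter (fun t => g t < 0) with hD
    have hDne : D.Nonempty := by
      obtain ⟨t, htT, htg⟩ := hgneg
      exact ⟨t, Finset.mem_filter.mpr ⟨htT, htg⟩⟩
    have hDpos : ∀ t ∈ D, 0 < m t := by
      intro t ht
      obtain ⟨htT, htg⟩ := Finset.mem_filter.mp ht
      rcases lt_or_eq_of_le (hmT t htT) with h | h
      · exact h
      · exact absurd (hgZ t ⟨htT, h.symm⟩) (ne_of_lt htg)
    obtain ⟨t₀, ht₀D, ht₀min⟩ := Finset.exists_min_image D (fun t => m t / (-(g t))) hDne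
    obtain ⟨ht₀T, ht₀g⟩ := Finset.mem_filter.mp ht₀D
    set lam := m t₀ / (-(g t₀)) with hlam
    have hlampos : 0 < lam := div_pos (hDpos t₀ ht₀D) (by linarith)
    set m₁ : V →ₗ[ℚ] ℚ := m + lam • g with hm₁
    have hm₁app : ∀ w, m₁ w = m w + lam * g w := fun w => rfl
    have hm₁T : ∀ t ∈ T, 0 ≤ m₁ t := by
      intro t htT
      rw [hm₁app]
      rcases le_or_gt 0 (g t) with hge | hlt
      · have := hmT t htT
        nlinarith
      · have htD : t ∈ D := Finset.mem_filter.mpr ⟨htT, hlt⟩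
        have hmin := ht₀min t htD
        have : lam * (-(g t)) ≤ m t :=
          (le_div_iff₀ (show (0:ℚ) < -(g t) by linarith)).mp hmin
        nlinarith
    have hm₁x : m₁ x < 0 := by
      rw [hm₁app, hgx, mul_zero, add_zero]
      exact hmx
    refine ⟨m₁, hm₁T, hm₁x, ?_⟩
    have hZsub : Z ⊆ {t : V | t ∈ T ∧ m₁ t = 0} := by
      intro z hz
      refine ⟨hz.1, ?_⟩
      rw [hm₁app, hz.2, hgZ z hz, mul_zero, add_zero]
    have ht₀mem : t₀ ∈ {t : V | t ∈ T ∧ m₁ t = 0} := by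
      refine ⟨ht₀T, ?_⟩
      have hne : g t₀ ≠ 0 := ne_of_lt ht₀g
      have h5 : lam * g t₀ = -(m t₀) := by
        rw [hlam, div_mul_eq_mul_div, div_neg, mul_div_assoc, div_self hne, mul_one]
      rw [hm₁app, h5, add_neg_cancel]
    have ht₀not : t₀ ∉ span ℚ Z := by
      intro hmem
      have : m t₀ = 0 := hZker hmem
      have := hDpos t₀ ht₀D
      linarith
    have hlt : span ℚ Z < span ℚ {t : V | t ∈ T ∧ m₁ t = 0} := by
      refine lt_of_le_of_ne (span_mono hZsub) fun heq => ht₀not ?_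
      rw [heq]
      exact subset_span ht₀mem
    exact Submodule.finrank_lt_finrank_of_lt hlt
  have main : ∀ (j : ℕ) (m : V →ₗ[ℚ] ℚ), (∀ t ∈ T, 0 ≤ m t) → m x < 0 → d - 1 - k m ≤ j →
      ∃ m' : V →ₗ[ℚ] ℚ, (∀ t ∈ T, 0 ≤ m' t) ∧ m' x < 0 ∧ k m' = d - 1 := by
    intro j
    induction j with
    | zero =>
      intro m hmT hmx hj
      have := upper m hmx
      exact ⟨m, hmT, hmx, by omega⟩
    | succ j ih =>
      intro m hmT hmx hj
      rcases eq_or_lt_of_le (upper m hmx) with heq | hlt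
      · exact ⟨m, hmT, hmx, heq⟩
      · obtain ⟨m', hm'T, hm'x, hkk⟩ := step m hmT hmx hlt
        have h2 := upper m' hm'x
        exact ih m' hm'T hm'x (by omega)
  obtain ⟨m₀, hm₀T, hm₀x⟩ := farkas hx
  obtain ⟨m, h1, h2, h3⟩ := main d m₀ hm₀T hm₀x (by omega)
  exact ⟨m, h1, h2, h3⟩


lemma prop_of_ker_eq {m f : V →ₗ[ℚ] ℚ} {w : V} (hker : LinearMap.ker m = LinearMap.ker f)
    (hw : m w ≠ 0) : ∃ c : ℚ, c ≠ 0 ∧ f = c • m := by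
  have hfw : f w ≠ 0 := by
    intro h
    exact hw (LinearMap.mem_ker.mp (hker ▸ LinearMap.mem_ker.mpr h))
  refine ⟨f w / m w, div_ne_zero hfw hw, ?_⟩
  refine (Module.Dual.eq_of_ker_eq_of_apply_eq w ?_ ?_ ?_).symm
  · rw [LinearMap.ker_smul _ _ (div_ne_zero hfw hw), hker]
  · rw [LinearMap.smul_apply, smul_eq_mul, div_mul_cancel₀ _ hw]
  · rw [LinearMap.smul_apply, smul_eq_mul, div_mul_cancel₀ _ hw]
    exact hfw

end ConeAux

open Classical in
/-- A choice of a nonzero functional vanishing on `S`, when one exists. -/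
noncomputable def pickF {V : Type*} [AddCommGroup V] [Module ℚ V] (S : Finset V) : V →ₗ[ℚ] ℚ :=
  if h : ∃ m : V →ₗ[ℚ] ℚ, m ≠ 0 ∧ ∀ z ∈ (↑S : Set V), m z = 0 then h.choose else 0

open Classical in
/-- The choice `pickF`, sign-normalized to be nonnegative on `T` when possible. -/
noncomputable def pickG {V : Type*} [AddCommGroup V] [Module ℚ V] (T S : Finset V) :
    V →ₗ[ℚ] ℚ :=
  if ∀ t ∈ T, 0 ≤ pickF S t then pickF S else -pickF S

namespace ConeAux

open Submodule Module

lemma pickF_spec {V : Type*} [AddCommGroup V] [Module ℚ V] {S : Finset V}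
    (h : ∃ m : V →ₗ[ℚ] ℚ, m ≠ 0 ∧ ∀ z ∈ (↑S : Set V), m z = 0) :
    pickF S ≠ 0 ∧ ∀ z ∈ (↑S : Set V), pickF S z = 0 := by
  rw [pickF, dif_pos h]
  exact h.choose_spec

lemma boundary_point {V : Type*} [AddCommGroup V] [Module ℚ V] [FiniteDimensional ℚ V]
    (T : Finset V) (hT : span ℚ (↑T : Set V) = ⊤)
    (x v : V) (hx : x ∈ ConeGen (↑T : Set V)) (hv : v ∉ ConeGen (↑T : Set V)) :
    ∃ (t : ℚ) (m : V →ₗ[ℚ] ℚ), x + t • v ∈ ConeGen (↑T : Set V) ∧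
      (∀ z ∈ ConeGen (↑T : Set V), 0 ≤ m z) ∧ m (x + t • v) = 0 ∧ m v < 0 ∧
      finrank ℚ (span ℚ (ConeGen (↑T : Set V) ∩ {z | m z = 0})) = finrank ℚ V - 1 := by
  classical
  set d := finrank ℚ V with hd
  set P : Finset (Finset V) := T.powerset.filter (fun S =>
    finrank ℚ (span ℚ (↑S : Set V)) = d - 1 ∧ (∀ t ∈ T, 0 ≤ pickG T S t) ∧
    pickG T S ≠ 0 ∧ (∀ z ∈ S, pickG T S z = 0)) with hP
  have hPmem : ∀ S ∈ P, S ⊆ T ∧ finrank ℚ (span ℚ (↑S : Set V)) = d - 1 ∧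
      (∀ t ∈ T, 0 ≤ pickG T S t) ∧ pickG T S ≠ 0 ∧ (∀ z ∈ S, pickG T S z = 0) := by
    intro S hS
    rw [hP, Finset.mem_filter, Finset.mem_powerset] at hS
    exact ⟨hS.1, hS.2⟩
  have hrep : ∀ z : V, z ∈ ConeGen (↑T : Set V) ↔ ∀ S ∈ P, 0 ≤ pickG T S z := by
    intro z
    constructor
    · intro hz S hS
      exact nonneg_on_coneGen (hPmem S hS).2.2.1 hz
    · intro hz
      by_contra hzc
      obtain ⟨m, hmT, hmz, hfr⟩ := exists_facet T hT z hzc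
      set S : Finset V := T.filter (fun t => m t = 0) with hSdef
      have hScoe : (↑S : Set V) = {t : V | t ∈ T ∧ m t = 0} := by
        ext t; simp [hSdef]
      have hm0 : m ≠ 0 := by
        intro h; rw [h] at hmz; simp at hmz
      have hEx : ∃ mm : V →ₗ[ℚ] ℚ, mm ≠ 0 ∧ ∀ w ∈ (↑S : Set V), mm w = 0 :=
        ⟨m, hm0, fun w hw => by rw [hScoe] at hw; exact hw.2⟩
      obtain ⟨hF0, hFS⟩ := pickF_spec hEx
      have hfrS : finrank ℚ (span ℚ (↑S : Set V)) = d - 1 := by rw [hScoe]; exact hfr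
      have hkerm : span ℚ (↑S : Set V) = LinearMap.ker m := by
        refine Submodule.eq_of_le_of_finrank_eq
          (span_le.mpr fun w hw => by rw [hScoe] at hw; exact hw.2) ?_
        rw [hfrS, finrank_ker_of_ne_zero hm0]
      have hkerF : span ℚ (↑S : Set V) = LinearMap.ker (pickF S) := by
        refine Submodule.eq_of_le_of_finrank_eq
          (span_le.mpr fun w hw => LinearMap.mem_ker.mpr (hFS w hw)) ?_
        rw [hfrS, finrank_ker_of_ne_zero hF0]
      obtain ⟨w, hwT, hmw⟩ : ∃ w ∈ T, 0 < m w := by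
        by_contra hc
        push_neg at hc
        refine hm0 (LinearMap.ker_eq_top.mp ?_)
        rw [eq_top_iff, ← hT]
        exact span_le.mpr fun t ht => LinearMap.mem_ker.mpr
          (le_antisymm (hc t ht) (hmT t ht))
      obtain ⟨c, hc0, hcF⟩ := prop_of_ker_eq (hkerm ▸ hkerF) (ne_of_gt hmw)
      obtain ⟨a, ha, hG⟩ : ∃ a : ℚ, 0 < a ∧ pickG T S = a • m := by
        rcases lt_or_gt_of_ne hc0 with hcneg | hcpos
        · have hcond : ¬ ∀ t ∈ T, 0 ≤ pickF S t := by
            push_neg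
            refine ⟨w, hwT, ?_⟩
            rw [hcF, LinearMap.smul_apply, smul_eq_mul]
            nlinarith
          refine ⟨-c, by linarith, ?_⟩
          rw [pickG, if_neg hcond, hcF]
          exact (neg_smul c m).symm
        · have hcond : ∀ t ∈ T, 0 ≤ pickF S t := by
            intro t ht
            rw [hcF, LinearMap.smul_apply, smul_eq_mul]
            exact mul_nonneg (le_of_lt hcpos) (hmT t ht)
          exact ⟨c, hcpos, by rw [pickG, if_pos hcond, hcF]⟩
      have hSP : S ∈ P := by
        rw [hP, Finset.mem_filter, Finset.mem_powerset]
        refine ⟨Finset.filter_subset _ _, hfrS, ?_, ?_, ?_⟩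
        · intro t ht
          rw [hG, LinearMap.smul_apply, smul_eq_mul]
          exact mul_nonneg (le_of_lt ha) (hmT t ht)
        · rw [hG]
          exact smul_ne_zero (ne_of_gt ha) hm0
        · intro zz hzS
          rw [hG, LinearMap.smul_apply, smul_eq_mul,
            (Finset.mem_filter.mp hzS).2, mul_zero]
      have h0 := hz S hSP
      rw [hG, LinearMap.smul_apply, smul_eq_mul] at h0
      nlinarith
  -- a direction functional witnessing that the ray leaves the cone
  obtain ⟨m₁, hm₁T, hm₁v⟩ := farkas hv
  have hm₁x : 0 ≤ m₁ x := nonneg_on_coneGen hm₁T hx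
  set t₀ : ℚ := m₁ x / (-(m₁ v)) + 1 with ht₀
  have hm₁vneg : (0:ℚ) < -(m₁ v) := by linarith
  have ht₀pos : 0 < t₀ := by
    have := div_nonneg hm₁x (le_of_lt hm₁vneg)
    rw [ht₀]; linarith
  have hxt₀ : x + t₀ • v ∉ ConeGen (↑T : Set V) := by
    intro hmem
    have h0 := nonneg_on_coneGen hm₁T hmem
    rw [map_add, map_smul, smul_eq_mul] at h0
    have h1 : t₀ * (-(m₁ v)) = m₁ x + (-(m₁ v)) := by
      rw [ht₀, add_mul, one_mul, div_mul_cancel₀ _ (ne_of_gt hm₁vneg)]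
    nlinarith
  obtain ⟨S₁, hS₁P, hS₁neg⟩ : ∃ S ∈ P, pickG T S (x + t₀ • v) < 0 := by
    by_contra hc
    push_neg at hc
    exact hxt₀ ((hrep _).mpr hc)
  have hS₁v : pickG T S₁ v < 0 := by
    have hx0 : 0 ≤ pickG T S₁ x := nonneg_on_coneGen (hPmem S₁ hS₁P).2.2.1 hx
    rw [map_add, map_smul, smul_eq_mul] at hS₁neg
    nlinarith
  set C := P.filter (fun S => pickG T S v < 0) with hC
  have hCne : C.Nonempty := ⟨S₁, Finset.mem_filter.mpr ⟨hS₁P, hS₁v⟩⟩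
  obtain ⟨S₀, hS₀C, hS₀min⟩ :=
    Finset.exists_min_image C (fun S => pickG T S x / (-(pickG T S v))) hCne
  obtain ⟨hS₀P, hS₀v⟩ := Finset.mem_filter.mp hS₀C
  set m := pickG T S₀ with hm
  have hmT : ∀ t ∈ T, 0 ≤ m t := (hPmem S₀ hS₀P).2.2.1
  have hmx : 0 ≤ m x := nonneg_on_coneGen hmT hx
  have hmvneg : (0:ℚ) < -(m v) := by linarith
  set tstar : ℚ := m x / (-(m v)) with hts
  have htstar : 0 ≤ tstar := div_nonneg hmx (le_of_lt hmvneg)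
  have hx' : x + tstar • v ∈ ConeGen (↑T : Set V) := by
    rw [hrep]
    intro S hS
    have hGx : 0 ≤ pickG T S x := nonneg_on_coneGen (hPmem S hS).2.2.1 hx
    rw [map_add, map_smul, smul_eq_mul]
    rcases le_or_gt 0 (pickG T S v) with hge | hlt
    · nlinarith
    · have hSC : S ∈ C := Finset.mem_filter.mpr ⟨hS, hlt⟩
      have hmin := hS₀min S hSC
      have h2 := (le_div_iff₀ (show (0:ℚ) < -(pickG T S v) by linarith)).mp hmin
      nlinarith
  have hmx' : m (x + tstar • v) = 0 := by
    rw [map_add, map_smul, smul_eq_mul]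
    have hne : m v ≠ 0 := by linarith
    have h5 : tstar * m v = -(m x) := by
      rw [hts, div_mul_eq_mul_div, div_neg, mul_div_assoc, div_self hne, mul_one]
    rw [h5, add_neg_cancel]
  have hm0 : m ≠ 0 := (hPmem S₀ hS₀P).2.2.2.1
  have hub : finrank ℚ (span ℚ (ConeGen (↑T : Set V) ∩ {z | m z = 0})) ≤ d - 1 := by
    have hle : span ℚ (ConeGen (↑T : Set V) ∩ {z | m z = 0}) ≤ LinearMap.ker m :=
      span_le.mpr fun z hz => hz.2
    exact (Submodule.finrank_mono hle).trans_eq (finrank_ker_of_ne_zero hm0)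
  have hlb : d - 1 ≤ finrank ℚ (span ℚ (ConeGen (↑T : Set V) ∩ {z | m z = 0})) := by
    have hsub : (↑S₀ : Set V) ⊆ ConeGen (↑T : Set V) ∩ {z | m z = 0} := by
      intro s hs
      have hsT : s ∈ T := (hPmem S₀ hS₀P).1 hs
      exact ⟨subset_coneGen _ (Finset.mem_coe.mpr hsT),
        (hPmem S₀ hS₀P).2.2.2.2 s hs⟩
    have h6 : finrank ℚ (span ℚ (↑S₀ : Set V)) ≤
        finrank ℚ (span ℚ (ConeGen (↑T : Set V) ∩ {z | m z = 0})) :=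
      Submodule.finrank_mono (span_mono hsub)
    rw [(hPmem S₀ hS₀P).2.1] at h6
    exact h6
  exact ⟨tstar, m, hx', fun z hz => nonneg_on_coneGen hmT hz, hmx', hS₀v,
    le_antisymm hub hlb⟩


end ConeAux


open ConeAux Submodule Module

/-- If `σ ⊂ ℚ^N` is a strongly convex `N`-dimensional rational polyhedral cone with `N > n`,
`σ' ⊂ ℚ^n` an `n`-dimensional convex rational polyhedral cone and `π(σ) = σ'`, then every
point of `σ'` has a preimage in `σ` on the boundary of `σ` (i.e. in a proper face);
equivalently, `σ'` is the union of the images of the `(N-1)`-dimensional faces of `σ`. -/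
theorem cone_image_eq_union_codim_one_faces {N n : ℕ} (hNn : n < N)
    (σ : Set (Fin N → ℚ)) (σ' : Set (Fin n → ℚ))
    (hσ : IsPolyCone σ) (hσsc : IsStronglyConvex σ) (hσdim : coneDim σ = N)
    (hσ' : IsPolyCone σ') (hσ'dim : coneDim σ' = n)
    (π : (Fin N → ℚ) →ₗ[ℚ] (Fin n → ℚ)) (hπ : π '' σ = σ') :
    (∀ y ∈ σ', ∃ x ∈ σ, π x = y ∧ ∃ τ, IsFace σ τ ∧ τ ≠ σ ∧ x ∈ τ) ∧
    σ' = ⋃ τ ∈ {τ | IsFace σ τ ∧ coneDim τ = N - 1}, π '' τ := by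
  classical
  obtain ⟨T, rfl⟩ := hσ
  have hfinV : finrank ℚ (Fin N → ℚ) = N := Module.finrank_fin_fun ℚ
  have hspanσ : span ℚ (ConeGen (↑T : Set (Fin N → ℚ))) = ⊤ :=
    Submodule.eq_top_of_finrank_eq (by rw [hfinV]; exact hσdim)
  have hTspan : span ℚ (↑T : Set (Fin N → ℚ)) = ⊤ := by
    rw [← span_coneGen]; exact hspanσ
  -- the kernel of π is nontrivial
  have hrange : finrank ℚ (LinearMap.range π) = n := by
    rw [LinearMap.range_eq_map, ← hspanσ, Submodule.map_span, hπ]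
    exact hσ'dim
  have hkerne : ∃ v : Fin N → ℚ, π v = 0 ∧ v ≠ 0 := by
    have hrn := LinearMap.finrank_range_add_finrank_ker π
    rw [hfinV, hrange] at hrn
    have : LinearMap.ker π ≠ ⊥ := by
      intro h
      rw [h, finrank_bot] at hrn
      omega
    obtain ⟨v, hv, hv0⟩ := (Submodule.ne_bot_iff _).mp this
    exact ⟨v, hv, hv0⟩
  obtain ⟨v, hvker, hv0⟩ := hkerne
  -- a direction in ker π escaping the cone
  obtain ⟨u, huker, huσ⟩ : ∃ u : Fin N → ℚ, π u = 0 ∧ u ∉ ConeGen (↑T : Set (Fin N → ℚ)) := by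
    by_cases h : v ∈ ConeGen (↑T : Set (Fin N → ℚ))
    · refine ⟨-v, by rw [map_neg, hvker, neg_zero], fun hc => hv0 (hσsc v h hc)⟩
    · exact ⟨v, hvker, h⟩
  have key : ∀ y ∈ σ', ∃ x ∈ ConeGen (↑T : Set (Fin N → ℚ)), π x = y ∧
      ∃ τ, IsFace (ConeGen (↑T : Set (Fin N → ℚ))) τ ∧ τ ≠ ConeGen (↑T : Set (Fin N → ℚ)) ∧
        x ∈ τ ∧ coneDim τ = N - 1 := by
    intro y hy
    rw [← hπ] at hy
    obtain ⟨x₀, hx₀, rfl⟩ := hy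
    obtain ⟨t, m, hx', hmσ, hmx', hmv, hfr⟩ := boundary_point T hTspan x₀ u hx₀ huσ
    refine ⟨x₀ + t • u, hx', ?_, ConeGen (↑T : Set (Fin N → ℚ)) ∩ {z | m z = 0},
      ⟨m, hmσ, rfl⟩, ?_, ⟨hx', hmx'⟩, ?_⟩
    · rw [map_add, map_smul, huker, smul_zero, add_zero]
    · intro h
      have hall : ∀ z ∈ ConeGen (↑T : Set (Fin N → ℚ)), m z = 0 := by
        intro z hz
        have hz2 : z ∈ ConeGen (↑T : Set (Fin N → ℚ)) ∩ {z | m z = 0} := by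
          rw [h]; exact hz
        exact hz2.2
      have hker : (⊤ : Submodule ℚ (Fin N → ℚ)) ≤ LinearMap.ker m := by
        rw [← hspanσ]
        exact span_le.mpr fun z hz => LinearMap.mem_ker.mpr (hall z hz)
      have : m u = 0 := hker (Submodule.mem_top) 
      linarith
    · show finrank ℚ (span ℚ (ConeGen (↑T : Set (Fin N → ℚ)) ∩ {z | m z = 0})) = N - 1
      rw [hfr, hfinV]
  refine ⟨fun y hy => ?_, ?_⟩
  · obtain ⟨x, hx, hpi, τ, hface, hne, hxτ, _⟩ := key y hy
    exact ⟨x, hx, hpi, τ, hface, hne, hxτ⟩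
  · ext y
    simp only [Set.mem_iUnion, Set.mem_setOf_eq, exists_prop]
    constructor
    · intro hy
      obtain ⟨x, hx, hpi, τ, hface, hne, hxτ, hdim⟩ := key y hy
      exact ⟨τ, ⟨hface, hdim⟩, ⟨x, hxτ, hpi⟩⟩
    · rintro ⟨τ, ⟨⟨mm, hmm, rfl⟩, _⟩, ⟨x, hxτ, rfl⟩⟩
      rw [← hπ]
      exact ⟨x, hxτ.1, rfl⟩
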